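/- Let n ≥ 2 and let t = (t_{i,j,k})_{1 ≤ i < j < k ≤ n} be a family of integers such that the normal form map N_t : ℤ^n → G(t) is bijective. Let t_v = (t_{i,j,k})_{i,j,k ≠ 2} be the subfamily of entries with all indices different from 2, and let G(t_v) be the corresponding presented group on generators b_1, b_3, …, b_n (with relations b_j·b_i = b_i·b_j·b_{j+1}^{t_{i,j,j+1}} ⋯ b_n^{t_{i,j,n}} for i < j, i, j ≠ 2). Then the subgroup ⟨a_1, a_3, …, a_n⟩ of G(t) is isomorphic to G(t_v) via an isomorphism sending b_i to a_i for each i ≠ 2. -/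

import Mathlib

/-!
Every element of `G(t)` has a normal form `a_1^{x_1} ⋯ a_n^{x_n}`, whatever `t`: by downward
induction on `i`, the normal forms supported on `{i, …, n}` are stable under right multiplication
by `⟨a_i, …, a_n⟩`, because conjugation by `a_i` preserves `⟨a_{i+1}, …, a_n⟩` (the defining
relations only produce tails of higher index). The assignment `b_i ↦ a_i` respects the relations
of `G(t_v)`, since the tail of a relation with `j ≥ 3` never involves `a_2`. The resulting
homomorphism `G(t_v) → G(t)` has image `⟨a_1, a_3, …, a_n⟩` and sends normal forms of `G(t_v)` to
normal forms of `G(t)` with vanishing second exponent; as every element of `G(t_v)` has a normal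
form and `N_t` is injective, it is injective.
-/

namespace HallPoly

/-- The ordered product `g_1^{e_1} ⋯ g_n^{e_n}` taken in increasing order of indices. -/
def prodPow {Γ : Type*} [Group Γ] (n : ℕ) (g : Fin n → Γ) (e : Fin n → ℤ) : Γ :=
  ((List.finRange n).map fun k => g k ^ e k).prod

/-- The relators of the presented group `G(t)`:
`(a_i · a_j · a_{j+1}^{t_{i,j,j+1}} ⋯ a_n^{t_{i,j,n}})⁻¹ · (a_j · a_i)` for `1 ≤ i < j ≤ n`. -/
def rels (n : ℕ) (t : Fin n → Fin n → Fin n → ℤ) : Set (FreeGroup (Fin n)) :=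
  { r | ∃ i j : Fin n, i < j ∧
      r = (FreeGroup.of i * FreeGroup.of j *
            prodPow n FreeGroup.of (fun k => if j < k then t i j k else 0))⁻¹ *
          (FreeGroup.of j * FreeGroup.of i) }

/-- The presented group `G(t)` with generators `a_1, …, a_n` and relations
`a_j·a_i = a_i·a_j·a_{j+1}^{t_{i,j,j+1}} ⋯ a_n^{t_{i,j,n}}` for `1 ≤ i < j ≤ n`. -/
abbrev G (n : ℕ) (t : Fin n → Fin n → Fin n → ℤ) : Type := PresentedGroup (rels n t)

/-- The generators `a_1, …, a_n` of `G(t)`. -/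
def a (n : ℕ) (t : Fin n → Fin n → Fin n → ℤ) (i : Fin n) : G n t :=
  PresentedGroup.of i

/-- The normal form map `N_t : ℤⁿ → G(t)`, `x ↦ a_1^{x_1} ⋯ a_n^{x_n}`. -/
def N (n : ℕ) (t : Fin n → Fin n → Fin n → ℤ) (x : Fin n → ℤ) : G n t :=
  prodPow n (a n t) x

section ProdPow

variable {Γ Δ : Type*} [Group Γ] [Group Δ]

theorem map_prodPow (f : Γ →* Δ) (n : ℕ) (g : Fin n → Γ) (e : Fin n → ℤ) :
    f (prodPow n g e) = prodPow n (fun k => f (g k)) e := by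
  simp [prodPow, map_list_prod, Function.comp_def]

theorem prodPow_zero (n : ℕ) (g : Fin n → Γ) : prodPow n g 0 = 1 :=
  List.prod_eq_one (by simp)

theorem prodPow_succ (n : ℕ) (g : Fin (n + 1) → Γ) (e : Fin (n + 1) → ℤ) :
    prodPow (n + 1) g e = g 0 ^ e 0 * prodPow n (fun k => g k.succ) (fun k => e k.succ) := by
  simp [prodPow, List.finRange_succ, Function.comp_def]

theorem prodPow_mem {n : ℕ} {g : Fin n → Γ} {e : Fin n → ℤ} {S : Subgroup Γ}
    (h : ∀ k, e k ≠ 0 → g k ∈ S) : prodPow n g e ∈ S := by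
  refine S.list_prod_mem fun x hx => ?_
  obtain ⟨k, -, rfl⟩ := List.mem_map.1 hx
  by_cases hk : e k = 0
  · simp [hk]
  · exact zpow_mem (h k hk) _

theorem prodPow_eq_zpow_mul_update {n : ℕ} (g : Fin n → Γ) {e : Fin n → ℤ} {i : Fin n}
    (h : ∀ k < i, e k = 0) : prodPow n g e = g i ^ e i * prodPow n g (Function.update e i 0) := by
  induction n with
  | zero => exact i.elim0
  | succ n ih =>
    rw [prodPow_succ, prodPow_succ]
    cases i using Fin.cases with
    | zero => simp
    | succ i =>
      rw [ih (fun k => g k.succ) fun k hk => h _ (Fin.succ_lt_succ_iff.2 hk),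
        Function.update_of_ne (Fin.succ_ne_zero i).symm, h 0 (Fin.succ_pos i), zpow_zero, one_mul,
        one_mul, Function.update_comp_eq_of_injective' e (Fin.succ_injective n)]

theorem prodPow_succAbove {n : ℕ} (g : Fin (n + 1) → Γ) {e : Fin (n + 1) → ℤ} {p : Fin (n + 1)}
    (hp : e p = 0) :
    prodPow (n + 1) g e = prodPow n (fun k => g (p.succAbove k)) (fun k => e (p.succAbove k)) := by
  induction n with
  | zero =>
    rw [Fin.fin_one_eq_zero p] at hp
    rw [prodPow_succ, hp]
    simp [prodPow]
  | succ n ih =>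
    cases p using Fin.cases with
    | zero => simp [prodPow_succ (n + 1), hp]
    | succ p =>
      rw [prodPow_succ (n + 1) g, prodPow_succ n (fun k => g (p.succ.succAbove k)),
        ih (fun k => g k.succ) (e := fun k => e k.succ) hp]
      simp [Fin.succ_succAbove_succ]

end ProdPow

section Closure

variable {Γ : Type*} [Group Γ]

theorem conj_mem_closure {s : Set Γ} {g : Γ} (h : ∀ x ∈ s, g * x * g⁻¹ ∈ Subgroup.closure s)
    {y : Γ} (hy : y ∈ Subgroup.closure s) : g * y * g⁻¹ ∈ Subgroup.closure s := by
  have hle : Subgroup.closure s ≤ (Subgroup.closure s).comap (MulAut.conj g).toMonoidHom :=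
    (Subgroup.closure_le _).2 fun x hx => h x hx
  exact hle hy

theorem mem_normalizer_closure_of_conj_mem {s : Set Γ} {g : Γ}
    (h₁ : ∀ x ∈ s, g * x * g⁻¹ ∈ Subgroup.closure s)
    (h₂ : ∀ x ∈ s, g⁻¹ * x * g ∈ Subgroup.closure s) :
    g ∈ Subgroup.normalizer (Subgroup.closure s : Set Γ) := by
  refine Subgroup.mem_normalizer_iff.2 fun y => ⟨conj_mem_closure h₁, fun hy => ?_⟩
  simpa [mul_assoc] using conj_mem_closure (g := g⁻¹) (by simpa using h₂) hy

theorem mul_mem_of_mem_closure {S s : Set Γ} (hS : ∀ g ∈ S, ∀ x ∈ s, ∀ z : ℤ, g * x ^ z ∈ S)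
    {y : Γ} (hy : y ∈ Subgroup.closure s) : ∀ g ∈ S, g * y ∈ S := by
  induction hy using Subgroup.closure_induction'' with
  | mem x hx => exact fun g hg => by simpa using hS g hg x hx 1
  | inv_mem x hx => exact fun g hg => by simpa using hS g hg x hx (-1)
  | one => simp
  | mul x y _ _ hx hy => exact fun g hg => mul_assoc g x y ▸ hy _ (hx g hg)

end Closure

section Generators

variable {n : ℕ} {t : Fin n → Fin n → Fin n → ℤ}

theorem a_mul_a_of_lt {i j : Fin n} (hij : i < j) :
    a n t j * a n t i =
      a n t i * a n t j * prodPow n (a n t) (fun k => if j < k then t i j k else 0) := by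
  have h := PresentedGroup.one_of_mem (rels := rels n t) ⟨i, j, hij, rfl⟩
  rw [map_mul, map_inv, inv_mul_eq_one, map_mul, map_mul, map_mul, map_prodPow] at h
  exact h.symm

theorem lift_eq_one_of_mem_rels {Γ : Type*} [Group Γ] {g : Fin n → Γ}
    (hg : ∀ i j, i < j →
      g j * g i = g i * g j * prodPow n g (fun k => if j < k then t i j k else 0)) :
    ∀ r ∈ rels n t, FreeGroup.lift g r = 1 := by
  rintro _ ⟨i, j, hij, rfl⟩
  rw [map_mul, map_inv, inv_mul_eq_one, map_mul, map_mul, map_mul, map_prodPow]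
  simpa using (hg i j hij).symm

end Generators

section Tails

variable (n : ℕ) (t : Fin n → Fin n → Fin n → ℤ)

def tailSubgroup (i : ℕ) : Subgroup (G n t) :=
  Subgroup.closure (a n t '' {k | i ≤ (k : ℕ)})

def tailNormalForms (i : ℕ) : Set (G n t) :=
  N n t '' {x | ∀ k : Fin n, (k : ℕ) < i → x k = 0}

variable {n t}

theorem a_mem_tailSubgroup {i : ℕ} {k : Fin n} (h : i ≤ k) : a n t k ∈ tailSubgroup n t i :=
  Subgroup.subset_closure ⟨k, h, rfl⟩

theorem tailSubgroup_antitone : Antitone (tailSubgroup n t) :=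
  fun _ _ h => Subgroup.closure_mono (Set.image_mono fun _ hk => le_trans h hk)

theorem tailSubgroup_zero : tailSubgroup n t 0 = ⊤ := by
  simp only [tailSubgroup, zero_le, Set.ofPred_true, Set.image_univ]
  exact PresentedGroup.closure_range_of _

theorem tailSubgroup_eq_bot {i : ℕ} (h : n ≤ i) : tailSubgroup n t i = ⊥ := by
  have : {k : Fin n | i ≤ (k : ℕ)} = ∅ := Set.eq_empty_of_forall_notMem fun k hk => by
    have := k.2
    simp only [Set.mem_ofPred_eq] at hk
    omega
  simp [tailSubgroup, this]

theorem prodPow_mem_tailSubgroup {i : ℕ} {e : Fin n → ℤ}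
    (h : ∀ k : Fin n, (k : ℕ) < i → e k = 0) :
    prodPow n (a n t) e ∈ tailSubgroup n t i :=
  prodPow_mem fun k hk => a_mem_tailSubgroup (not_lt.1 fun hlt => hk (h k hlt))

theorem a_mem_normalizer_tailSubgroup (J : ℕ) (i : Fin n) (hi : (i : ℕ) < J) :
    a n t i ∈ Subgroup.normalizer (tailSubgroup n t J : Set (G n t)) := by
  by_cases hJ : n ≤ J
  · rw [tailSubgroup_eq_bot hJ, Subgroup.normalizer_eq_top]
    trivial
  have ih : ∀ k : Fin n, J ≤ k →
      a n t i ∈ Subgroup.normalizer (tailSubgroup n t (k + 1) : Set (G n t)) :=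
    fun k hk => a_mem_normalizer_tailSubgroup (k + 1) i (by omega)
  -- `a_i⁻¹ a_k a_i = a_k w` with `w ∈ ⟨a_{k+1}, …⟩`, so `a_i a_k a_i⁻¹ = a_k (a_i w⁻¹ a_i⁻¹)`,
  -- which is where the statement for `k + 1` is needed.
  refine mem_normalizer_closure_of_conj_mem ?_ ?_ <;> rintro _ ⟨k, hk, rfl⟩ <;>
    simp only [Set.mem_ofPred_eq] at hk
  all_goals
    have hrel := a_mul_a_of_lt (t := t) (show i < k from Fin.lt_def.2 (by omega))
    set w := prodPow n (a n t) (fun l => if k < l then t i k l else 0)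
    have hw : w ∈ tailSubgroup n t (k + 1) := prodPow_mem_tailSubgroup fun l hl => by
      simp [show ¬ k < l from fun h => by rw [Fin.lt_def] at h; omega]
    have hle : tailSubgroup n t (k + 1) ≤ tailSubgroup n t J := tailSubgroup_antitone (by omega)
  · have hconj : a n t i * w⁻¹ * (a n t i)⁻¹ ∈ tailSubgroup n t (k + 1) :=
      (Subgroup.mem_normalizer_iff.1 (ih k hk) _).1 (inv_mem hw)
    have heq : a n t i * a n t k * (a n t i)⁻¹ = a n t k * (a n t i * w⁻¹ * (a n t i)⁻¹) := by
      rw [show a n t i * a n t k = a n t k * a n t i * w⁻¹ by rw [hrel]; group]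
      group
    exact heq ▸ mul_mem (a_mem_tailSubgroup hk) (hle hconj)
  · have heq : (a n t i)⁻¹ * a n t k * a n t i = a n t k * w := by
      rw [mul_assoc, hrel]
      group
    exact heq ▸ mul_mem (a_mem_tailSubgroup hk) (hle hw)
termination_by n - J
decreasing_by
  have := k.2
  omega

theorem one_mem_tailNormalForms (i : ℕ) : (1 : G n t) ∈ tailNormalForms n t i :=
  ⟨0, fun _ _ => rfl, prodPow_zero n _⟩

theorem tailNormalForms_subset_tailSubgroup (i : ℕ) :
    tailNormalForms n t i ⊆ tailSubgroup n t i := by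
  rintro _ ⟨x, hx, rfl⟩
  exact prodPow_mem_tailSubgroup hx

theorem zpow_mul_mem_tailNormalForms (i : Fin n) (z : ℤ) {g : G n t}
    (hg : g ∈ tailNormalForms n t (i + 1)) :
    a n t i ^ z * g ∈ tailNormalForms n t i := by
  obtain ⟨x, hx, rfl⟩ := hg
  refine ⟨Function.update x i z, fun k hk => ?_, ?_⟩
  · rw [Function.update_of_ne (Fin.ne_of_lt hk)]
    exact hx k (by omega)
  · have hlow : ∀ k < i, Function.update x i z k = 0 := fun k hk => by
      rw [Function.update_of_ne (Fin.ne_of_lt hk)]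
      exact hx k (by rw [Fin.lt_def] at hk; omega)
    rw [N, prodPow_eq_zpow_mul_update _ hlow, Function.update_self, Function.update_idem,
      Function.update_eq_self_iff.2 (hx i (Nat.lt_succ_self _)).symm, N]

theorem exists_zpow_mul_of_mem_tailNormalForms (i : Fin n) {g : G n t}
    (hg : g ∈ tailNormalForms n t i) :
    ∃ z : ℤ, ∃ g' ∈ tailNormalForms n t (i + 1), g = a n t i ^ z * g' := by
  obtain ⟨x, hx, rfl⟩ := hg
  refine ⟨x i, N n t (Function.update x i 0), ⟨_, fun k hk => ?_, rfl⟩,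
    prodPow_eq_zpow_mul_update _ fun k hk => hx k hk⟩
  by_cases hki : k = i
  · simp [hki]
  · rw [Function.update_of_ne hki]
    exact hx k (by have : (k : ℕ) ≠ i := Fin.val_ne_of_ne hki; omega)

theorem mul_mem_tailNormalForms (i : ℕ) :
    ∀ h ∈ tailSubgroup n t i, ∀ g ∈ tailNormalForms n t i, g * h ∈ tailNormalForms n t i := by
  by_cases hi : n ≤ i
  · simp [tailSubgroup_eq_bot hi]
  have ih : ∀ h ∈ tailSubgroup n t (i + 1), ∀ g ∈ tailNormalForms n t (i + 1),
      g * h ∈ tailNormalForms n t (i + 1) :=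
    mul_mem_tailNormalForms (i + 1)
  let i' : Fin n := ⟨i, by omega⟩
  intro h hh
  refine mul_mem_of_mem_closure ?_ hh
  rintro g hg _ ⟨j, hj, rfl⟩ z
  obtain ⟨z₀, g', hg', rfl⟩ := exists_zpow_mul_of_mem_tailNormalForms i' hg
  rcases (show i ≤ (j : ℕ) from hj).eq_or_lt with hij | hij
  · obtain rfl : i' = j := Fin.ext hij
    -- `a_i^{z₀} g' a_i^z = a_i^{z₀ + z} (a_i^{-z} g' a_i^z)`, and the conjugate stays in the tail.
    have hconj : (a n t i' ^ z)⁻¹ * g' * a n t i' ^ z ∈ tailSubgroup n t (i + 1) :=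
      (Subgroup.mem_normalizer_iff''.1
        (zpow_mem (a_mem_normalizer_tailSubgroup (i + 1) i' (Nat.lt_succ_self i)) z) _).1
        (tailNormalForms_subset_tailSubgroup _ hg')
    have hmem := zpow_mul_mem_tailNormalForms i' (z₀ + z) (ih _ hconj 1 (one_mem_tailNormalForms _))
    simpa [zpow_add, mul_assoc] using hmem
  · rw [mul_assoc]
    exact zpow_mul_mem_tailNormalForms i' z₀ (ih _ (zpow_mem (a_mem_tailSubgroup hij) z) g' hg')
termination_by n - i

theorem N_surjective : Function.Surjective (N n t) := fun g => by
  have h := mul_mem_tailNormalForms 0 g (tailSubgroup_zero ▸ Subgroup.mem_top g) 1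
    (one_mem_tailNormalForms 0)
  rw [one_mul] at h
  obtain ⟨x, -, hx⟩ := h
  exact ⟨x, hx⟩

end Tails

section Deletion

variable {n : ℕ} {t : Fin (n + 1) → Fin (n + 1) → Fin (n + 1) → ℤ}
  {tv : Fin n → Fin n → Fin n → ℤ} {p : Fin (n + 1)}

theorem a_succAbove_mul_a_succAbove
    (htv : ∀ i j k, tv i j k = t (p.succAbove i) (p.succAbove j) (p.succAbove k))
    (hp : ∀ i j, i < j → j < p → t i j p = 0) {i j : Fin n} (hij : i < j) :
    a (n + 1) t (p.succAbove j) * a (n + 1) t (p.succAbove i) =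
      a (n + 1) t (p.succAbove i) * a (n + 1) t (p.succAbove j) *
        prodPow n (fun k => a (n + 1) t (p.succAbove k))
          (fun k => if j < k then tv i j k else 0) := by
  have hij' := Fin.strictMono_succAbove p hij
  rw [a_mul_a_of_lt hij', prodPow_succAbove _ (p := p) ?_]
  · simp [htv, Fin.succAbove_lt_succAbove_iff]
  · split_ifs with h
    · exact hp _ _ hij' h
    · rfl

variable (htv : ∀ i j k, tv i j k = t (p.succAbove i) (p.succAbove j) (p.succAbove k))
  (hp : ∀ i j, i < j → j < p → t i j p = 0)

def succAboveHom : G n tv →* G (n + 1) t :=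
  PresentedGroup.toGroup (lift_eq_one_of_mem_rels fun _ _ => a_succAbove_mul_a_succAbove htv hp)

theorem succAboveHom_a (i : Fin n) :
    succAboveHom htv hp (a n tv i) = a (n + 1) t (p.succAbove i) :=
  PresentedGroup.toGroup.of _

theorem succAboveHom_N (x : Fin n → ℤ) :
    succAboveHom htv hp (N n tv x) = N (n + 1) t (p.insertNth 0 x) := by
  rw [N, N, map_prodPow, prodPow_succAbove _ (Fin.insertNth_apply_same _ _ _)]
  simp [succAboveHom_a]

theorem succAboveHom_injective (hN : Function.Injective (N (n + 1) t)) :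
    Function.Injective (succAboveHom htv hp) := by
  refine (injective_iff_map_eq_one _).2 fun g hg => ?_
  obtain ⟨x, rfl⟩ := N_surjective g
  rw [succAboveHom_N] at hg
  have h0 : p.insertNth 0 x = 0 := hN (hg.trans (prodPow_zero _ _).symm)
  have hx : x = 0 := funext fun k => by simpa using congr_fun h0 (p.succAbove k)
  rw [hx]
  exact prodPow_zero _ _

theorem range_succAboveHom :
    (succAboveHom htv hp).range =
      Subgroup.closure (Set.range fun i => a (n + 1) t (p.succAbove i)) := by
  rw [MonoidHom.range_eq_map, ← PresentedGroup.closure_range_of, MonoidHom.map_closure,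
    ← Set.range_comp]
  exact congrArg _ (congrArg _ (funext (succAboveHom_a htv hp)))

end Deletion

/-- If `G(t)` is consistent (with `n ≥ 2`), the subgroup `V(t) = ⟨a_1, a_3, …, a_n⟩` of
`G(t)` is isomorphic to the presented group `G(t_v)`, where `t_v` is the subfamily of `t` of
entries with all indices different from `2`; the isomorphism sends the generators of `G(t_v)`
to `a_1, a_3, …, a_n`.  Here the order embedding `(1 : Fin (m+2)).succAbove` realizes the
index set `{1, 3, …, n}` (0-based: all indices except `1`) inside `Fin (m+2)`. -/
theorem subgroup_V_iso (m : ℕ) (t : Fin (m + 2) → Fin (m + 2) → Fin (m + 2) → ℤ)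
    (hN : Function.Bijective (N (m + 2) t))
    (tv : Fin (m + 1) → Fin (m + 1) → Fin (m + 1) → ℤ)
    (htv : ∀ i j k : Fin (m + 1), tv i j k =
      t ((1 : Fin (m + 2)).succAbove i) ((1 : Fin (m + 2)).succAbove j)
        ((1 : Fin (m + 2)).succAbove k)) :
    ∃ φ : G (m + 1) tv ≃*
        (Subgroup.closure (Set.range fun i : Fin (m + 1) =>
          a (m + 2) t ((1 : Fin (m + 2)).succAbove i)) : Subgroup (G (m + 2) t)),
      ∀ i : Fin (m + 1),
        (φ (a (m + 1) tv i) : G (m + 2) t) = a (m + 2) t ((1 : Fin (m + 2)).succAbove i) := by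
  have hp : ∀ i j : Fin (m + 2), i < j → j < 1 → t i j 1 = 0 := fun i j hij hj =>
    absurd hij (by simp [(Fin.lt_one_iff j).1 hj])
  exact ⟨(MonoidHom.ofInjective (succAboveHom_injective htv hp hN.1)).trans
      (MulEquiv.subgroupCongr (range_succAboveHom htv hp)),
    fun i => succAboveHom_a htv hp i⟩

end HallPoly
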